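/- For every α ∈ ℂ, the 4-dimensional complex algebra B⁴₂₄(α) with nonzero products e₁e₁ = e₂, e₁e₂ = e₃, e₁e₃ = e₄, e₂e₁ = αe₃, e₂e₂ = αe₄, e₃e₁ = αe₄ is a nilpotent bicommutative algebra. -/

import Mathlib

noncomputable def mB424 (α : ℂ) : (Fin 4 → ℂ) →ₗ[ℂ] (Fin 4 → ℂ) →ₗ[ℂ] (Fin 4 → ℂ) :=
  LinearMap.mk₂ ℂ (fun u v =>
      ![0, u 0 * v 0, u 0 * v 1 + α * (u 1 * v 0),
        u 0 * v 2 + α * (u 1 * v 1) + α * (u 2 * v 0)])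
    (fun x y v => by funext i; fin_cases i <;> simp <;> ring)
    (fun a x v => by funext i; fin_cases i <;> simp <;> ring)
    (fun u x y => by funext i; fin_cases i <;> simp <;> ring)
    (fun u a x => by funext i; fin_cases i <;> simp <;> ring)

noncomputable def mulSub {V : Type*} [AddCommGroup V] [Module ℂ V]
    (μ : V →ₗ[ℂ] V →ₗ[ℂ] V) (S T : Submodule ℂ V) : Submodule ℂ V :=
  Submodule.span ℂ {w | ∃ u ∈ S, ∃ v ∈ T, w = μ u v}

/-- The powers of an algebra: `A¹ = A`, `Aⁿ = Σ_{i+j=n} Aⁱ·Aʲ`. -/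
noncomputable def pw {V : Type*} [AddCommGroup V] [Module ℂ V]
    (μ : V →ₗ[ℂ] V →ₗ[ℂ] V) : ℕ → Submodule ℂ V
  | 0 => ⊤
  | 1 => ⊤
  | (n+2) => ⨆ i : Fin (n+1), mulSub μ (pw μ (i+1)) (pw μ (n+1-i))
  decreasing_by all_goals (have := i.isLt; omega)

/-!
The coordinates of `ℂ⁴` carry degrees `0, 1, 2, 3` and `mB424 α` has degree one: the
product of vectors vanishing in degrees `< a` and `< b` vanishes in degrees `< a + b + 1`.
Hence `Aⁿ⁺¹` vanishes in degrees `< n`, and `A⁵ = 0`.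
-/

section Powers

variable {V : Type*} [AddCommGroup V] [Module ℂ V] (μ : V →ₗ[ℂ] V →ₗ[ℂ] V)

theorem mulSub_le_iff {S T U : Submodule ℂ V} :
    mulSub μ S T ≤ U ↔ ∀ u ∈ S, ∀ v ∈ T, μ u v ∈ U := by
  rw [mulSub, Submodule.span_le]
  constructor
  · exact fun h u hu v hv => h ⟨u, hu, v, hv, rfl⟩
  · rintro h w ⟨u, hu, v, hv, rfl⟩
    exact h u hu v hv

theorem pw_succ_le_of_mul_mem (F : ℕ → Submodule ℂ V) (hF : Antitone F) (hF₀ : F 0 = ⊤)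
    (hmul : ∀ a b, ∀ u ∈ F a, ∀ v ∈ F b, μ u v ∈ F (a + b + 1)) (n : ℕ) :
    pw μ (n + 1) ≤ F n := by
  induction n using Nat.strong_induction_on with
  | _ n ih =>
    match n with
    | 0 => simp [hF₀]
    | m + 1 =>
      rw [pw]
      refine iSup_le fun i => ?_
      have hi := i.isLt
      have hleft : pw μ (i + 1) ≤ F i := ih i (by omega)
      have hright : pw μ (m + 1 - i) ≤ F (m - i) := by
        rw [show m + 1 - (i : ℕ) = m - i + 1 by omega]
        exact ih (m - i) (by omega)
      rw [mulSub_le_iff]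
      intro u hu v hv
      exact hF (by omega) (hmul _ _ u (hleft hu) v (hright hv))

end Powers

section VanishingBelow

variable {R : Type*} [Semiring R] {n : ℕ}

def vanishingBelow (k : ℕ) : Submodule R (Fin n → R) where
  carrier := {v | ∀ i : Fin n, (i : ℕ) < k → v i = 0}
  add_mem' ha hb i hi := by simp [ha i hi, hb i hi]
  zero_mem' _ _ := rfl
  smul_mem' _ _ ha i hi := by simp [ha i hi]

theorem vanishingBelow_antitone : Antitone (vanishingBelow (R := R) (n := n)) :=
  fun _ _ hab _ hv i hi => hv i (lt_of_lt_of_le hi hab)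

theorem vanishingBelow_zero : vanishingBelow (R := R) (n := n) 0 = ⊤ :=
  eq_top_iff.mpr fun _ _ _ hi => absurd hi (Nat.not_lt_zero _)

theorem vanishingBelow_self : vanishingBelow (R := R) (n := n) n = ⊥ :=
  eq_bot_iff.mpr fun _ hv => (Submodule.mem_bot R).mpr (funext fun i => hv i i.isLt)

end VanishingBelow

theorem mB424_apply (α : ℂ) (u v : Fin 4 → ℂ) :
    mB424 α u v = ![0, u 0 * v 0, u 0 * v 1 + α * (u 1 * v 0),
        u 0 * v 2 + α * (u 1 * v 1) + α * (u 2 * v 0)] := rfl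

theorem mB424_right_comm (α : ℂ) (x y z : Fin 4 → ℂ) :
    mB424 α (mB424 α x y) z = mB424 α (mB424 α x z) y := by
  funext i
  fin_cases i <;>
    simp only [mB424_apply, Fin.zero_eta, Fin.mk_one, Fin.reduceFinMk, Matrix.cons_val_zero,
      Matrix.cons_val_one, Matrix.cons_val] <;>
    ring

theorem mB424_left_comm (α : ℂ) (x y z : Fin 4 → ℂ) :
    mB424 α x (mB424 α y z) = mB424 α y (mB424 α x z) := by
  funext i
  fin_cases i <;>
    simp only [mB424_apply, Fin.zero_eta, Fin.mk_one, Fin.reduceFinMk, Matrix.cons_val_zero,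
      Matrix.cons_val_one, Matrix.cons_val] <;>
    ring

theorem mB424_mem_vanishingBelow (α : ℂ) {a b : ℕ} {u v : Fin 4 → ℂ}
    (hu : u ∈ vanishingBelow a) (hv : v ∈ vanishingBelow b) :
    mB424 α u v ∈ vanishingBelow (a + b + 1) := by
  have hprod : ∀ j k : Fin 4, (j : ℕ) + k < a + b → u j * v k = 0 := by
    intro j k hjk
    rcases lt_or_ge (j : ℕ) a with hj | hj
    · rw [hu j hj, zero_mul]
    · rw [hv k (by omega), mul_zero]
  intro i hi
  fin_cases i <;> simp at hi
  · rfl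
  · simp [mB424_apply, hprod 0 0 (by simp; omega)]
  · simp [mB424_apply, hprod 0 1 (by simp; omega), hprod 1 0 (by simp; omega)]
  · simp [mB424_apply, hprod 0 2 (by simp; omega), hprod 1 1 (by simp; omega),
      hprod 2 0 (by simp; omega)]

/-- For every `α ∈ ℂ`, the algebra `B⁴₂₄(α)` is a nilpotent bicommutative algebra
(with `A⁵ = 0`). -/
theorem B424_nilpotent_bicommutative (α : ℂ) :
    (∀ x y z : Fin 4 → ℂ, mB424 α (mB424 α x y) z = mB424 α (mB424 α x z) y) ∧
    (∀ x y z : Fin 4 → ℂ, mB424 α x (mB424 α y z) = mB424 α y (mB424 α x z)) ∧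
    pw (mB424 α) 5 = ⊥ := by
  refine ⟨mB424_right_comm α, mB424_left_comm α, eq_bot_iff.mpr ?_⟩
  calc pw (mB424 α) (4 + 1)
      ≤ vanishingBelow 4 :=
        pw_succ_le_of_mul_mem _ _ vanishingBelow_antitone vanishingBelow_zero
          (fun _ _ _ hu _ hv => mB424_mem_vanishingBelow α hu hv) 4
    _ = ⊥ := vanishingBelow_self
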